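/- arXiv:1202.1948 — 2 statements merged into one kernel-verified Lean document; each statement's English description precedes it below -/
import Mathlib

section
/- Let β > 1 satisfy β² = mβ + 1 with m ≥ 1 an integer. Let a, b ∈ ℤ and define the sequence G_0 = b, G_1 = a, G_{k+2} = m·G_{k+1} + G_k. If a + b/β > 0, then there exists an index k ≥ 0 such that both G_k ≥ 0 and G_{k+1} ≥ 0. -/
/-!
The two eigenvalues of the recurrence are `β` and its conjugate `-β⁻¹`. Binet's formula writes
`(β + β⁻¹) G_k = β^k (a + b/β) - (-β⁻¹)^k (a - β b)`; the first term tends to `+∞` because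
`a + b/β > 0`, while the second tends to `0`. Hence `G_k → +∞`, so all late terms are nonnegative.
-/

open Filter

namespace LinearRecurrence

variable {m β : ℝ} {u : ℕ → ℝ}

theorem add_div_eq_pow_mul (hβ0 : β ≠ 0) (hβ : β ^ 2 = m * β + 1)
    (hu : ∀ k, u (k + 2) = m * u (k + 1) + u k) (k : ℕ) :
    u (k + 1) + u k / β = β ^ k * (u 1 + u 0 / β) := by
  induction k with
  | zero => simp
  | succ k ih =>
    have step : u (k + 2) + u (k + 1) / β = β * (u (k + 1) + u k / β) := by
      rw [hu k]
      field_simp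
      linear_combination -u (k + 1) * hβ
    rw [step, ih, pow_succ]
    ring

theorem sub_mul_eq_neg_inv_pow_mul (hβ0 : β ≠ 0) (hβ : β ^ 2 = m * β + 1)
    (hu : ∀ k, u (k + 2) = m * u (k + 1) + u k) (k : ℕ) :
    u (k + 1) - β * u k = (-β⁻¹) ^ k * (u 1 - β * u 0) := by
  induction k with
  | zero => simp
  | succ k ih =>
    have step : u (k + 2) - β * u (k + 1) = -β⁻¹ * (u (k + 1) - β * u k) := by
      rw [hu k]
      field_simp
      linear_combination -u (k + 1) * hβ
    rw [step, ih, pow_succ]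
    ring

theorem tendsto_atTop (hβ1 : 1 < β) (hβ : β ^ 2 = m * β + 1)
    (hu : ∀ k, u (k + 2) = m * u (k + 1) + u k) (hpos : 0 < u 1 + u 0 / β) :
    Tendsto u atTop atTop := by
  have hβ0 : 0 < β := by linarith
  have binet : ∀ k, u k = (β ^ k * (u 1 + u 0 / β) + -((-β⁻¹) ^ k * (u 1 - β * u 0)))
      / (β + β⁻¹) := fun k => by
    rw [← add_div_eq_pow_mul hβ0.ne' hβ hu, ← sub_mul_eq_neg_inv_pow_mul hβ0.ne' hβ hu]
    field_simp
    ring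
  have hconj : |-β⁻¹| < 1 := by
    rw [abs_neg, abs_inv, abs_of_pos hβ0]
    exact inv_lt_one_of_one_lt₀ hβ1
  have hdominant := (tendsto_pow_atTop_atTop_of_one_lt hβ1).atTop_mul_const hpos
  have hdecaying :=
    ((tendsto_pow_atTop_nhds_zero_of_abs_lt_one hconj).mul_const (u 1 - β * u 0)).neg
  rw [funext binet]
  exact (hdominant.atTop_add hdecaying).atTop_div_const (by positivity)

end LinearRecurrence

theorem stmt6_general (m : ℤ) (β : ℝ) (hβ : 1 < β)
    (hβq : β ^ 2 = m * β + 1)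
    (a b : ℤ) (G : ℕ → ℤ)
    (hG0 : G 0 = b) (hG1 : G 1 = a)
    (hGrec : ∀ k, G (k + 2) = m * G (k + 1) + G k)
    (hpos : (a : ℝ) + (b : ℝ) / β > 0) :
    ∃ k : ℕ, 0 ≤ G k ∧ 0 ≤ G (k + 1) := by
  have hrec : ∀ k, (G (k + 2) : ℝ) = m * G (k + 1) + G k := fun k =>
    mod_cast hGrec k
  have hlim : Tendsto (fun k => (G k : ℝ)) atTop atTop :=
    LinearRecurrence.tendsto_atTop hβ hβq hrec (by rwa [hG0, hG1])
  have hnonneg : ∀ᶠ k in atTop, (0 : ℝ) ≤ G k := hlim.eventually_ge_atTop 0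
  obtain ⟨k, hk, hk1⟩ := (hnonneg.and ((tendsto_add_atTop_nat 1).eventually hnonneg)).exists
  exact ⟨k, by exact_mod_cast hk, by exact_mod_cast hk1⟩

/-- For β > 1 with β² = mβ + 1, m ≥ 1, and the sequence G₀ = b, G₁ = a,
G_{k+2} = m G_{k+1} + G_k: if a + b/β > 0 then some two consecutive terms
G_k, G_{k+1} are both nonnegative. -/
theorem stmt6 (m : ℤ) (hm : 1 ≤ m) (β : ℝ) (hβ : 1 < β)
    (hβq : β ^ 2 = m * β + 1)
    (a b : ℤ) (G : ℕ → ℤ)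
    (hG0 : G 0 = b) (hG1 : G 1 = a)
    (hGrec : ∀ k, G (k + 2) = m * G (k + 1) + G k)
    (hpos : (a : ℝ) + (b : ℝ) / β > 0) :
    ∃ k : ℕ, 0 ≤ G k ∧ 0 ≤ G (k + 1) :=
  stmt6_general m β hβ hβq a b G hG0 hG1 hGrec hpos
end

section
/- Let β > 1 satisfy β² = mβ - 1, m ≥ 3, with conjugate β' = 1/β. For every rational x with -β/(β+1) < x < 1/(β+1), there exists an even positive integer N such that (β^N - 1)x ∈ ℤ[β] and the Galois conjugate ((1/β)^N - 1)x = (β'^N - 1)x lies in the interval (-1/(β+1), β/(β+1)). -/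
/-!
Since `β ^ 2 = m * β - 1`, the vector `(β, 1)` is an eigenvector of `C = !![m, -1; 1, 0]` for the
eigenvalue `β`, so `β ^ n = (C ^ n)₁₀ * β + (C ^ n)₁₁`. As `det C = 1`, the reduction of `C` modulo
the denominator `q` of `x` has finite order `k` in `GL₂(ℤ/q)`; hence `q ∣ β ^ N - 1` in `ℤ[β]` for
every multiple `N` of `k`, and then `(β ^ N - 1) * x ∈ ℤ[β]`. The conjugate `(β⁻¹ ^ N - 1) * x`
tends to `-x`, which lies in the open interval, so a large even multiple of `k` works.
-/

open Filter

def quadraticCompanion (m : ℤ) : Matrix (Fin 2) (Fin 2) ℤ := !![m, -1; 1, 0]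

lemma quadraticCompanion_det (m : ℤ) : (quadraticCompanion m).det = 1 := by
  simp [quadraticCompanion, Matrix.det_fin_two]

lemma pow_eq_quadraticCompanion_pow {R : Type*} [CommRing R] (m : ℤ) {β : R}
    (hβ : β ^ 2 = m * β - 1) (n : ℕ) :
    β ^ n = ((quadraticCompanion m ^ n) 1 0 : R) * β + ((quadraticCompanion m ^ n) 1 1 : R) := by
  induction n with
  | zero => simp
  | succ n ih =>
    rw [pow_succ, ih, pow_succ]
    generalize quadraticCompanion m ^ n = P
    simp [Matrix.mul_apply, Fin.sum_univ_two, quadraticCompanion]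
    linear_combination (P 1 0 : R) * hβ

lemma exists_pos_pow_map_eq_one {n : Type*} [Fintype n] [DecidableEq n] (q : ℕ) [NeZero q]
    {A : Matrix n n ℤ} (hA : IsUnit A.det) :
    ∃ k > 0, (A.map (Int.cast : ℤ → ZMod q)) ^ k = 1 := by
  have : IsUnit (A.map (Int.cast : ℤ → ZMod q)) := by
    rw [Matrix.isUnit_iff_isUnit_det, ← Int.cast_det]
    exact hA.map (Int.castRingHom _)
  exact this.isOfFinOrder.exists_pow_eq_one

lemma dvd_sub_one_apply_of_map_eq_one {n : Type*} [DecidableEq n] {q : ℕ} {A : Matrix n n ℤ}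
    (hA : A.map (Int.cast : ℤ → ZMod q) = 1) (i j : n) : (q : ℤ) ∣ (A - 1) i j := by
  rw [← ZMod.intCast_zmod_eq_zero_iff_dvd, Matrix.sub_apply, Int.cast_sub]
  have := congrFun (congrFun hA i) j
  rw [Matrix.map_apply] at this
  rw [this]
  by_cases h : i = j <;> simp [Matrix.one_apply, h]

lemma exists_pos_forall_pow_mul_sub_one_eq {R : Type*} [CommRing R] (m : ℤ) {β : R}
    (hβ : β ^ 2 = m * β - 1) (q : ℕ) [NeZero q] :
    ∃ k > 0, ∀ t : ℕ, ∃ a b : ℤ, β ^ (k * t) - 1 = q * (a * β + b) := by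
  obtain ⟨k, hk, hpow⟩ :=
    exists_pos_pow_map_eq_one q (A := quadraticCompanion m) (by simp [quadraticCompanion_det])
  refine ⟨k, hk, fun t => ?_⟩
  have hmap : (quadraticCompanion m ^ (k * t)).map (Int.cast : ℤ → ZMod q) = 1 := by
    change (Int.castRingHom (ZMod q)).mapMatrix (quadraticCompanion m ^ (k * t)) = 1
    rw [map_pow, pow_mul]
    exact (congrArg (· ^ t) hpow).trans (one_pow t)
  obtain ⟨a, ha⟩ := dvd_sub_one_apply_of_map_eq_one hmap 1 0
  obtain ⟨b, hb⟩ := dvd_sub_one_apply_of_map_eq_one hmap 1 1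
  refine ⟨a, b, ?_⟩
  simp only [Matrix.sub_apply, Matrix.one_apply_ne one_ne_zero, Matrix.one_apply_eq, sub_zero]
    at ha hb
  rw [pow_eq_quadraticCompanion_pow m hβ, ha, eq_add_of_sub_eq hb]
  push_cast
  ring

lemma tendsto_inv_pow_sub_one_mul {β : ℝ} (hβ : 1 < β) (x : ℝ) :
    Tendsto (fun n : ℕ => (β⁻¹ ^ n - 1) * x) atTop (nhds (-x)) := by
  have h := tendsto_pow_atTop_nhds_zero_of_lt_one (by positivity) (inv_lt_one_of_one_lt₀ hβ)
  simpa using (h.sub_const 1).mul_const x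

theorem stmt18_general (m : ℤ) (β : ℝ) (hβ : 1 < β)
    (hβq : β ^ 2 = m * β - 1)
    (x : ℚ) (hx1 : -β / (β + 1) < (x : ℝ)) (hx2 : (x : ℝ) < 1 / (β + 1)) :
    ∃ N : ℕ, Even N ∧ 0 < N ∧
      (β ^ N - 1) * (x : ℝ) ∈ Subring.closure ({β} : Set ℝ) ∧
      (β⁻¹ ^ N - 1) * (x : ℝ) ∈ Set.Ioo (-(1 / (β + 1))) (β / (β + 1)) := by
  have : NeZero x.den := ⟨x.den_nz⟩
  obtain ⟨k, hk, hdiv⟩ := exists_pos_forall_pow_mul_sub_one_eq m hβq x.den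
  have hconj : ∀ᶠ n in atTop, (β⁻¹ ^ n - 1) * (x : ℝ) ∈ Set.Ioo (-(1 / (β + 1))) (β / (β + 1)) :=
    (tendsto_inv_pow_sub_one_mul hβ x).eventually
      (Ioo_mem_nhds (neg_lt_neg hx2) (by rw [neg_div] at hx1; linarith))
  have hmul : Tendsto (fun t : ℕ => k * (2 * t)) atTop atTop :=
    tendsto_id.const_mul_atTop' (by norm_num) |>.const_mul_atTop' hk
  obtain ⟨t, ht, htpos⟩ := ((hmul.eventually hconj).and (eventually_gt_atTop 0)).exists
  obtain ⟨a, b, hab⟩ := hdiv (2 * t)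
  refine ⟨k * (2 * t), ⟨k * t, by ring⟩, by positivity, ?_, ht⟩
  have hβZ : (β ^ (k * (2 * t)) - 1) * (x : ℝ) = (x.num * a : ℤ) * β + (x.num * b : ℤ) := by
    rw [hab, Rat.cast_def]
    push_cast
    field_simp
  rw [hβZ]
  exact add_mem (mul_mem (intCast_mem _ _) (Subring.subset_closure rfl)) (intCast_mem _ _)

/-- For β > 1 with β² = mβ - 1, m ≥ 3 (conjugate β' = 1/β): for every
rational x with -β/(β+1) < x < 1/(β+1) there is an even positive N with
(β^N - 1)x ∈ ℤ[β] and ((1/β)^N - 1)x ∈ (-1/(β+1), β/(β+1)). -/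
theorem stmt18 (m : ℤ) (hm : 3 ≤ m) (β : ℝ) (hβ : 1 < β)
    (hβq : β ^ 2 = m * β - 1)
    (x : ℚ) (hx1 : -β / (β + 1) < (x : ℝ)) (hx2 : (x : ℝ) < 1 / (β + 1)) :
    ∃ N : ℕ, Even N ∧ 0 < N ∧
      (β ^ N - 1) * (x : ℝ) ∈ Subring.closure ({β} : Set ℝ) ∧
      (β⁻¹ ^ N - 1) * (x : ℝ) ∈ Set.Ioo (-(1 / (β + 1))) (β / (β + 1)) :=
  stmt18_general m β hβ hβq x hx1 hx2
end
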